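/- arXiv:1807.11334 — 3 statements merged into one kernel-verified Lean document; each statement's English description precedes it below -/
import Mathlib

section
/- Let (X,Σ) be a measurable space, let 𝒮 and 𝒯 be probability measures on X, let C > 0, and let C₁,…,C_N be a finite measurable partition of X such that 𝒮(Cᵢ) ≥ C·𝒯(Cᵢ) for every i. Then for every positive integer m, the expectation over a sample S = (s₁,…,s_m) drawn from the product measure 𝒮^m of the total 𝒯-mass of the cells missed by the sample satisfies E_{S∼𝒮^m}[ Σ_{i : {s₁,…,s_m} ∩ Cᵢ = ∅} 𝒯(Cᵢ) ] ≤ N/(C·m·e), where e is Euler's number. -/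
open MeasureTheory

/-- Key real inequality: `t (1-s)^m ≤ 1/(C m e)` when `C t ≤ s ≤ 1`, `t ≥ 0`. -/
lemma key_real_ineq (C t s : ℝ) (hC : 0 < C) (ht : 0 ≤ t) (hs1 : s ≤ 1)
    (hts : C * t ≤ s) (m : ℕ) (hm : 0 < m) :
    t * (1 - s) ^ m ≤ 1 / (C * m * Real.exp 1) := by
  have hCt1 : C * t ≤ 1 := hts.trans hs1
  have h1s : 0 ≤ 1 - s := by linarith
  have h1Ct : 0 ≤ 1 - C * t := by linarith
  have hpow : (1 - s) ^ m ≤ (1 - C * t) ^ m :=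
    pow_le_pow_left₀ h1s (by linarith) m
  have hexp : (1 - C * t) ≤ Real.exp (-(C * t)) := by
    have := Real.add_one_le_exp (-(C * t)); linarith
  have hpow2 : (1 - C * t) ^ m ≤ Real.exp (-(C * t)) ^ m :=
    pow_le_pow_left₀ h1Ct hexp m
  have hexp_pow : Real.exp (-(C * t)) ^ m = Real.exp (-(C * (m * t))) := by
    rw [← Real.exp_nat_mul]; ring_nf
  have hchain : t * (1 - s) ^ m ≤ t * Real.exp (-(C * (m * t))) := by
    rw [← hexp_pow]
    exact mul_le_mul_of_nonneg_left (hpow.trans hpow2) ht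
  refine hchain.trans ?_
  -- let x = C * m * t ; x * exp (-x) ≤ exp (-1)
  set x : ℝ := C * m * t with hx
  have hx0 : 0 ≤ x := by positivity
  have hxe : x * Real.exp (-x) ≤ Real.exp (-1 : ℝ) := by
    have h := Real.add_one_le_exp (x - 1)
    have hxle : x ≤ Real.exp (x - 1) := by linarith
    calc x * Real.exp (-x) ≤ Real.exp (x - 1) * Real.exp (-x) :=
          mul_le_mul_of_nonneg_right hxle (Real.exp_nonneg _)
      _ = Real.exp (-1 : ℝ) := by rw [← Real.exp_add]; ring_nf
  have hCm : 0 < C * m := by positivity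
  have harg : -(C * (m * t)) = -x := by rw [hx]; ring
  rw [harg]
  have heq : t * Real.exp (-x) = (x * Real.exp (-x)) / (C * m) := by
    field_simp [hx]; ring
  rw [heq, div_le_div_iff₀ hCm (by positivity : (0:ℝ) < C * m * Real.exp 1)]
  have hxe' : x * Real.exp (-x) * Real.exp 1 ≤ 1 := by
    have h2 : x * Real.exp (-x) * Real.exp 1 ≤ Real.exp (-1 : ℝ) * Real.exp 1 :=
      mul_le_mul_of_nonneg_right hxe (Real.exp_nonneg 1)
    have h3 : Real.exp (-1 : ℝ) * Real.exp 1 = 1 := by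
      rw [← Real.exp_add]; norm_num
    linarith
  nlinarith [mul_le_mul_of_nonneg_right hxe' hCm.le]

open scoped Classical in
/-- For a finite measurable partition `C₁,…,C_N` of a measurable space `X` with
`𝒮(Cᵢ) ≥ C·𝒯(Cᵢ)` for every `i`, the expected total `𝒯`-mass of the cells missed by an
i.i.d. sample of size `m` from `𝒮` is at most `N/(C·m·e)`. -/
theorem expected_missed_mass_bound {X : Type*} [MeasurableSpace X]
    (𝒮 𝒯 : Measure X) [IsProbabilityMeasure 𝒮] [IsProbabilityMeasure 𝒯]
    (C : ℝ) (hC : 0 < C) (N : ℕ) (cells : Fin N → Set X)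
    (hmeas : ∀ i, MeasurableSet (cells i))
    (hdisj : Pairwise (Function.onFun Disjoint cells))
    (hcover : (⋃ i, cells i) = Set.univ)
    (hWR : ∀ i, ENNReal.ofReal C * 𝒯 (cells i) ≤ 𝒮 (cells i))
    (m : ℕ) (hm : 0 < m) :
    (∫⁻ S : Fin m → X, (∑ i, if ∀ j, S j ∉ cells i then 𝒯 (cells i) else 0)
        ∂(Measure.pi fun _ : Fin m => 𝒮))
      ≤ ENNReal.ofReal (N / (C * m * Real.exp 1)) := by
  have hset : ∀ i : Fin N, MeasurableSet (Set.univ.pi fun _ : Fin m => (cells i)ᶜ) :=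
    fun i => MeasurableSet.univ_pi fun _ => (hmeas i).compl
  have hfun : ∀ (i : Fin N) (S : Fin m → X),
      (if ∀ j, S j ∉ cells i then 𝒯 (cells i) else 0)
        = (Set.univ.pi fun _ : Fin m => (cells i)ᶜ).indicator (fun _ => 𝒯 (cells i)) S := by
    intro i S
    by_cases h : ∀ j, S j ∉ cells i <;> simp [Set.indicator_apply, Set.mem_pi, h]
  have hrw : (∫⁻ S : Fin m → X, (∑ i, if ∀ j, S j ∉ cells i then 𝒯 (cells i) else 0)
        ∂(Measure.pi fun _ : Fin m => 𝒮))
      = ∑ i : Fin N, 𝒯 (cells i) * (1 - 𝒮 (cells i)) ^ m := by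
    have : (∫⁻ S : Fin m → X, (∑ i, if ∀ j, S j ∉ cells i then 𝒯 (cells i) else 0)
        ∂(Measure.pi fun _ : Fin m => 𝒮))
      = ∫⁻ S : Fin m → X, (∑ i : Fin N,
          (Set.univ.pi fun _ : Fin m => (cells i)ᶜ).indicator (fun _ => 𝒯 (cells i)) S)
        ∂(Measure.pi fun _ : Fin m => 𝒮) := by
      refine lintegral_congr fun S => ?_
      exact Finset.sum_congr rfl fun i _ => hfun i S
    rw [this, lintegral_finset_sum _ (fun i _ => measurable_const.indicator (hset i))]
    refine Finset.sum_congr rfl fun i _ => ?_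
    rw [lintegral_indicator_const (hset i), Measure.pi_pi]
    rw [Finset.prod_const, Finset.card_univ, Fintype.card_fin,
      measure_compl (hmeas i) (measure_ne_top _ _), measure_univ]
  rw [hrw]
  have hterm : ∀ i : Fin N,
      𝒯 (cells i) * (1 - 𝒮 (cells i)) ^ m ≤ ENNReal.ofReal (1 / (C * m * Real.exp 1)) := by
    intro i
    set t : ℝ := (𝒯 (cells i)).toReal with htdef
    set s : ℝ := (𝒮 (cells i)).toReal with hsdef
    have ht0 : 0 ≤ t := ENNReal.toReal_nonneg
    have hs0 : 0 ≤ s := ENNReal.toReal_nonneg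
    have hT : 𝒯 (cells i) = ENNReal.ofReal t := (ENNReal.ofReal_toReal (measure_ne_top _ _)).symm
    have hS : 𝒮 (cells i) = ENNReal.ofReal s := (ENNReal.ofReal_toReal (measure_ne_top _ _)).symm
    have hs1 : s ≤ 1 := by
      have h : 𝒮 (cells i) ≤ 1 := prob_le_one
      rw [hsdef]
      calc (𝒮 (cells i)).toReal ≤ (1 : ENNReal).toReal :=
            ENNReal.toReal_mono (by simp) h
        _ = 1 := by simp
    have hts : C * t ≤ s := by
      have h := ENNReal.toReal_mono (measure_ne_top _ _) (hWR i)
      rwa [ENNReal.toReal_mul, ENNReal.toReal_ofReal hC.le] at h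
    have h1 : (1 : ENNReal) - 𝒮 (cells i) = ENNReal.ofReal (1 - s) := by
      rw [ENNReal.ofReal_sub _ hs0, ENNReal.ofReal_one, hS]
    rw [hT, h1, ← ENNReal.ofReal_pow (by linarith), ← ENNReal.ofReal_mul ht0]
    exact ENNReal.ofReal_le_ofReal (key_real_ineq C t s hC ht0 hs1 hts m hm)
  calc ∑ i : Fin N, 𝒯 (cells i) * (1 - 𝒮 (cells i)) ^ m
      ≤ ∑ _i : Fin N, ENNReal.ofReal (1 / (C * m * Real.exp 1)) :=
        Finset.sum_le_sum fun i _ => hterm i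
    _ = (N : ENNReal) * ENNReal.ofReal (1 / (C * m * Real.exp 1)) := by
        simp [Finset.sum_const, Finset.card_univ, nsmul_eq_mul]
    _ = ENNReal.ofReal ((N : ℝ) * (1 / (C * m * Real.exp 1))) := by
        rw [ENNReal.ofReal_mul (by positivity), ENNReal.ofReal_natCast]
    _ = ENNReal.ofReal ((N : ℝ) / (C * m * Real.exp 1)) := by rw [mul_one_div]
end

section
/- Let (X,Σ) be a measurable space, let 𝒮 and 𝒯 be probability measures on X, let C > 0, and let C₁,…,C_N be a finite measurable partition of X with 𝒮(Cᵢ) ≥ C·𝒯(Cᵢ) for every i. Then for every positive integer m and every t > 0, the probability over a sample S = (s₁,…,s_m) drawn from the product measure 𝒮^m that Σ_{i : {s₁,…,s_m} ∩ Cᵢ = ∅} 𝒯(Cᵢ) ≥ t is at most N/(C·m·e·t), where e is Euler's number. -/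
/-!
A cell of `𝒯`-mass `y` is missed by all `m` sample points with probability `(1 - x)^m`,
where `x = 𝒮(cell) ≥ C y`; hence it contributes at most `(x / C) e^{-m x} ≤ 1 / (C m e)` to the
expected missed mass, since `u e^{-u} ≤ e^{-1}`. Summing over the `N` cells bounds the expectation by
`N / (C m e)`, and Markov's inequality gives the tail bound.
-/

open MeasureTheory

theorem mul_one_sub_pow_le_one_div_mul_exp_one {x : ℝ} (hx₀ : 0 ≤ x) (hx₁ : x ≤ 1) {m : ℕ}
    (hm : 0 < m) : x * (1 - x) ^ m ≤ 1 / (m * Real.exp 1) := by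
  calc x * (1 - x) ^ m ≤ x * Real.exp (-x) ^ m := by
        gcongr; exact Real.one_sub_le_exp_neg x
    _ = 1 / m * ((m * x) * Real.exp (-(m * x))) := by
        rw [← Real.exp_nat_mul]; field_simp
    _ ≤ 1 / m * Real.exp (-1) := by gcongr; exact Real.mul_exp_neg_le_exp_neg_one _
    _ = 1 / (m * Real.exp 1) := by rw [Real.exp_neg]; field_simp

theorem ENNReal.mul_one_sub_pow_le_of_ofReal_mul_le {a b : ENNReal} {C : ℝ} (hC : 0 < C)
    (hab : ENNReal.ofReal C * a ≤ b) (hb : b ≤ 1) {m : ℕ} (hm : 0 < m) :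
    a * (1 - b) ^ m ≤ ENNReal.ofReal (1 / (C * m * Real.exp 1)) := by
  have hb_top : b ≠ ⊤ := ne_top_of_le_ne_top ENNReal.one_ne_top hb
  have ha_top : a ≠ ⊤ := by
    rintro rfl
    simp [ENNReal.mul_top, hC, hb_top] at hab
  obtain ⟨x, hx₀, rfl⟩ : ∃ x : ℝ, 0 ≤ x ∧ ENNReal.ofReal x = b :=
    ⟨b.toReal, ENNReal.toReal_nonneg, ENNReal.ofReal_toReal hb_top⟩
  obtain ⟨y, hy₀, rfl⟩ : ∃ y : ℝ, 0 ≤ y ∧ ENNReal.ofReal y = a :=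
    ⟨a.toReal, ENNReal.toReal_nonneg, ENNReal.ofReal_toReal ha_top⟩
  have hx₁ : x ≤ 1 := by simpa using hb
  have hyx : C * y ≤ x := by
    rwa [← ENNReal.ofReal_mul hC.le, ENNReal.ofReal_le_ofReal_iff hx₀] at hab
  rw [← ENNReal.ofReal_one, ← ENNReal.ofReal_sub _ hx₀, ← ENNReal.ofReal_pow (by linarith),
    ← ENNReal.ofReal_mul hy₀]
  apply ENNReal.ofReal_le_ofReal
  calc y * (1 - x) ^ m ≤ x / C * (1 - x) ^ m := by
        gcongr; rwa [le_div_iff₀' hC]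
    _ = 1 / C * (x * (1 - x) ^ m) := by ring
    _ ≤ 1 / C * (1 / (m * Real.exp 1)) := by
        gcongr; exact mul_one_sub_pow_le_one_div_mul_exp_one hx₀ hx₁ hm
    _ = 1 / (C * m * Real.exp 1) := by rw [mul_assoc C]; field_simp

theorem setOf_forall_notMem_eq_univ_pi {ι X : Type*} (s : Set X) :
    {S : ι → X | ∀ j, S j ∉ s} = Set.univ.pi fun _ => sᶜ := by
  ext S; simp

theorem Measure.pi_setOf_forall_notMem {ι X : Type*} [Fintype ι] [MeasurableSpace X]
    (μ : Measure X) [SigmaFinite μ] (s : Set X) :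
    Measure.pi (fun _ : ι => μ) {S | ∀ j, S j ∉ s} = μ sᶜ ^ Fintype.card ι := by
  rw [setOf_forall_notMem_eq_univ_pi, Measure.pi_pi, Finset.prod_const, Finset.card_univ]

theorem measurableSet_setOf_forall_notMem {ι X : Type*} [Finite ι] [MeasurableSpace X]
    {s : Set X} (hs : MeasurableSet s) : MeasurableSet {S : ι → X | ∀ j, S j ∉ s} := by
  rw [setOf_forall_notMem_eq_univ_pi]
  exact MeasurableSet.univ_pi fun _ => hs.compl

noncomputable def missedMass {ι κ X : Type*} [Fintype κ] [MeasurableSpace X] (ν : Measure X)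
    (cells : κ → Set X) (S : ι → X) : ENNReal :=
  ∑ i, {S : ι → X | ∀ j, S j ∉ cells i}.indicator (fun _ => ν (cells i)) S

section missedMass

variable {ι κ X : Type*} [Fintype ι] [Fintype κ] [MeasurableSpace X] {cells : κ → Set X}

theorem measurable_missedMass (ν : Measure X) (hmeas : ∀ i, MeasurableSet (cells i)) :
    Measurable (missedMass (ι := ι) ν cells) :=
  Finset.measurable_sum _ fun i _ =>
    measurable_const.indicator (measurableSet_setOf_forall_notMem (hmeas i))

theorem lintegral_missedMass (μ ν : Measure X) [SigmaFinite μ]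
    (hmeas : ∀ i, MeasurableSet (cells i)) :
    ∫⁻ S, missedMass ν cells S ∂Measure.pi (fun _ : ι => μ)
      = ∑ i, ν (cells i) * μ (cells i)ᶜ ^ Fintype.card ι := by
  have hmissed i := measurableSet_setOf_forall_notMem (ι := ι) (hmeas i)
  unfold missedMass
  rw [lintegral_finsetSum _ fun i _ => measurable_const.indicator (hmissed i)]
  simp only [lintegral_indicator_const (hmissed _), Measure.pi_setOf_forall_notMem]

theorem lintegral_missedMass_le (μ ν : Measure X) [IsProbabilityMeasure μ] {C : ℝ} (hC : 0 < C)
    (hmeas : ∀ i, MeasurableSet (cells i))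
    (hratio : ∀ i, ENNReal.ofReal C * ν (cells i) ≤ μ (cells i))
    (hι : 0 < Fintype.card ι) :
    ∫⁻ S, missedMass ν cells S ∂Measure.pi (fun _ : ι => μ)
      ≤ ENNReal.ofReal (Fintype.card κ / (C * Fintype.card ι * Real.exp 1)) := by
  have hcell i : ν (cells i) * μ (cells i)ᶜ ^ Fintype.card ι
      ≤ ENNReal.ofReal (1 / (C * Fintype.card ι * Real.exp 1)) := by
    rw [prob_compl_eq_one_sub (hmeas i)]
    exact ENNReal.mul_one_sub_pow_le_of_ofReal_mul_le hC (hratio i) prob_le_one hι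
  calc ∫⁻ S, missedMass ν cells S ∂Measure.pi (fun _ : ι => μ)
      = ∑ i, ν (cells i) * μ (cells i)ᶜ ^ Fintype.card ι := lintegral_missedMass μ ν hmeas
    _ ≤ ∑ _i : κ, ENNReal.ofReal (1 / (C * Fintype.card ι * Real.exp 1)) :=
        Finset.sum_le_sum fun i _ => hcell i
    _ = ENNReal.ofReal (Fintype.card κ / (C * Fintype.card ι * Real.exp 1)) := by
        rw [Finset.sum_const, Finset.card_univ, nsmul_eq_mul, ← ENNReal.ofReal_natCast,
          ← ENNReal.ofReal_mul (Nat.cast_nonneg _), mul_one_div]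

end missedMass

open scoped Classical in
theorem missed_mass_markov_bound_general {X : Type*} [MeasurableSpace X]
    (𝒮 𝒯 : Measure X) [IsProbabilityMeasure 𝒮]
    (C : ℝ) (hC : 0 < C) (N : ℕ) (cells : Fin N → Set X)
    (hmeas : ∀ i, MeasurableSet (cells i))
    (hWR : ∀ i, ENNReal.ofReal C * 𝒯 (cells i) ≤ 𝒮 (cells i))
    (m : ℕ) (hm : 0 < m) (t : ℝ) (ht : 0 < t) :
    Measure.pi (fun _ : Fin m => 𝒮)
        {S | ENNReal.ofReal t ≤ ∑ i, if ∀ j, S j ∉ cells i then 𝒯 (cells i) else 0}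
      ≤ ENNReal.ofReal (N / (C * m * Real.exp 1 * t)) := by
  have hevent : {S : Fin m → X |
        ENNReal.ofReal t ≤ ∑ i, if ∀ j, S j ∉ cells i then 𝒯 (cells i) else 0}
      = {S | ENNReal.ofReal t ≤ missedMass 𝒯 cells S} := by
    ext S; simp [missedMass, Set.indicator_apply]
  have hexpect := lintegral_missedMass_le (ι := Fin m) 𝒮 𝒯 hC hmeas hWR (by simpa using hm)
  simp only [Fintype.card_fin] at hexpect
  rw [hevent]
  calc Measure.pi (fun _ => 𝒮) {S | ENNReal.ofReal t ≤ missedMass 𝒯 cells S}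
      ≤ (∫⁻ S, missedMass 𝒯 cells S ∂Measure.pi (fun _ => 𝒮)) / ENNReal.ofReal t :=
        meas_ge_le_lintegral_div (measurable_missedMass 𝒯 hmeas).aemeasurable
          (by simpa using ht) ENNReal.ofReal_ne_top
    _ ≤ ENNReal.ofReal (N / (C * m * Real.exp 1)) / ENNReal.ofReal t := by gcongr
    _ = ENNReal.ofReal (N / (C * m * Real.exp 1 * t)) := by
        rw [← ENNReal.ofReal_div_of_pos ht, div_div]

open scoped Classical in
/-- Under the weight-ratio condition `𝒮(Cᵢ) ≥ C·𝒯(Cᵢ)` on a finite measurable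
partition, for every `t > 0` the probability over a sample `S ∼ 𝒮^m` that the total `𝒯`-mass
of missed cells is at least `t` is at most `N/(C·m·e·t)`. -/
theorem missed_mass_markov_bound {X : Type*} [MeasurableSpace X]
    (𝒮 𝒯 : Measure X) [IsProbabilityMeasure 𝒮] [IsProbabilityMeasure 𝒯]
    (C : ℝ) (hC : 0 < C) (N : ℕ) (cells : Fin N → Set X)
    (hmeas : ∀ i, MeasurableSet (cells i))
    (hdisj : Pairwise (Function.onFun Disjoint cells))
    (hcover : (⋃ i, cells i) = Set.univ)
    (hWR : ∀ i, ENNReal.ofReal C * 𝒯 (cells i) ≤ 𝒮 (cells i))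
    (m : ℕ) (hm : 0 < m) (t : ℝ) (ht : 0 < t) :
    Measure.pi (fun _ : Fin m => 𝒮)
        {S | ENNReal.ofReal t ≤ ∑ i, if ∀ j, S j ∉ cells i then 𝒯 (cells i) else 0}
      ≤ ENNReal.ofReal (N / (C * m * Real.exp 1 * t)) :=
  missed_mass_markov_bound_general 𝒮 𝒯 C hC N cells hmeas hWR m hm t ht
end

section
/- Let (X,Σ) be a measurable space, let 𝒮 and 𝒯 be probability measures on X, let C > 0, and let C₁,…,C_N be a finite measurable partition of X with 𝒮(Cᵢ) ≥ C·𝒯(Cᵢ) for every i; write cell(x) for the partition cell containing x. Then for every positive integer m, the expectation over a sample S = (s₁,…,s_m) drawn from 𝒮^m of the product measure of pairs with at least one empty cell satisfies E_{S∼𝒮^m}[ (𝒯×𝒯){(x₁,x₂) : cell(x₁) ∩ {s₁,…,s_m} = ∅ or cell(x₂) ∩ {s₁,…,s_m} = ∅} ] ≤ 2N/(C·m·e), where e is Euler's number. -/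
/-!
A cell `c` is missed by all `m` sample points with probability `(1 - 𝒮 c)ᵐ`, and the weight-ratio
condition gives `𝒯 c ≤ 𝒮 c / C`, so each cell contributes at most `t (1 - t)ᵐ / C` with
`t = 𝒮 c`; since `1 - t ≤ e⁻ᵗ` and `y e⁻ʸ ≤ e⁻¹`, this is at most `1 / (C m e)`. Summing over the
`N` cells bounds the expected `𝒯`-measure of the union of missed cells, and a pair has a
coordinate there with `𝒯 × 𝒯`-probability at most twice that.
-/

open MeasureTheory ENNReal Real

lemma mul_one_sub_pow_le_one_div_mul_exp_one_s13 {t : ℝ} (ht₀ : 0 ≤ t) (ht₁ : t ≤ 1) {m : ℕ}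
    (hm : 0 < m) : t * (1 - t) ^ m ≤ 1 / (m * exp 1) := by
  have key : m * t * (1 - t) ^ m ≤ exp (-1) :=
    calc m * t * (1 - t) ^ m ≤ m * t * exp (-t) ^ m := by
          gcongr; exact one_sub_le_exp_neg t
      _ = m * t * exp (-(m * t)) := by rw [← exp_nat_mul]; ring_nf
      _ ≤ exp (-1) := mul_exp_neg_le_exp_neg_one _
  have hm' : (0 : ℝ) < m := Nat.cast_pos.mpr hm
  rw [exp_neg] at key
  rw [le_div_iff₀ (by positivity)]
  field_simp at key ⊢
  linarith

section

variable {X : Type*} [MeasurableSpace X]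

lemma measure_mul_measure_compl_pow_le {μ ν : Measure X} [IsProbabilityMeasure μ] {s : Set X}
    (hs : MeasurableSet s) {C : ℝ} (hC : 0 < C) (hratio : ENNReal.ofReal C * ν s ≤ μ s)
    {m : ℕ} (hm : 0 < m) : ν s * μ sᶜ ^ m ≤ ENNReal.ofReal (1 / (C * m * exp 1)) := by
  set t := μ.real s
  have ht₀ : 0 ≤ t := measureReal_nonneg
  have ht₁ : t ≤ 1 := measureReal_le_one
  have hμs : μ s = ENNReal.ofReal t := (ofReal_measureReal (measure_ne_top μ s)).symm
  have hμsc : μ sᶜ = ENNReal.ofReal (1 - t) := by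
    rw [prob_compl_eq_one_sub hs, hμs, ← ENNReal.ofReal_one, ENNReal.ofReal_sub _ ht₀]
  have hνs : ν s ≤ ENNReal.ofReal (t / C) := by
    rw [ENNReal.ofReal_div_of_pos hC, ← hμs, ENNReal.le_div_iff_mul_le (.inl (by simpa using hC))
      (.inl ofReal_ne_top), mul_comm]
    exact hratio
  calc ν s * μ sᶜ ^ m ≤ ENNReal.ofReal (t / C) * ENNReal.ofReal (1 - t) ^ m := by
        rw [hμsc]; gcongr
    _ = ENNReal.ofReal (t * (1 - t) ^ m / C) := by
        rw [← ENNReal.ofReal_pow (by linarith), ← ENNReal.ofReal_mul (by positivity)]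
        ring_nf
    _ ≤ ENNReal.ofReal (1 / (C * m * exp 1)) := by
        apply ENNReal.ofReal_le_ofReal
        calc t * (1 - t) ^ m / C ≤ 1 / (m * exp 1) / C := by
              gcongr; exact mul_one_sub_pow_le_one_div_mul_exp_one_s13 ht₀ ht₁ hm
          _ = 1 / (C * m * exp 1) := by field_simp

lemma Measure.prod_fst_mem_or_snd_mem_le (μ ν : Measure X) [IsProbabilityMeasure μ]
    [IsProbabilityMeasure ν] (A B : Set X) :
    μ.prod ν {p : X × X | p.1 ∈ A ∨ p.2 ∈ B} ≤ μ A + ν B := by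
  have hunion : {p : X × X | p.1 ∈ A ∨ p.2 ∈ B} = A ×ˢ Set.univ ∪ Set.univ ×ˢ B := by
    ext p; simp
  calc μ.prod ν {p : X × X | p.1 ∈ A ∨ p.2 ∈ B}
      ≤ μ.prod ν (A ×ˢ Set.univ) + μ.prod ν (Set.univ ×ˢ B) := hunion ▸ measure_union_le _ _
    _ = μ A + ν B := by simp [Measure.prod_prod]

def emptyCellRegion {ι κ : Type*} (cells : ι → Set X) (S : κ → X) : Set X :=
  {x | ∃ i, x ∈ cells i ∧ ∀ j, S j ∉ cells i}

variable {ι κ : Type*} [Fintype ι]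

lemma measure_emptyCellRegion_le (ν : Measure X) (cells : ι → Set X) (S : κ → X) :
    ν (emptyCellRegion cells S) ≤
      ∑ i, (Set.univ.pi fun _ : κ => (cells i)ᶜ).indicator (fun _ => ν (cells i)) S := by
  classical
  have hsub : emptyCellRegion cells S ⊆
      ⋃ i ∈ Finset.univ.filter (fun i => S ∈ Set.univ.pi fun _ : κ => (cells i)ᶜ), cells i := by
    rintro x ⟨i, hx, hmiss⟩
    simp only [Set.mem_iUnion, Finset.mem_filter, Finset.mem_univ, true_and]
    exact ⟨i, fun j _ => hmiss j, hx⟩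
  calc ν (emptyCellRegion cells S) ≤ _ := measure_mono hsub
    _ ≤ _ := measure_biUnion_finset_le _ _
    _ = _ := by simp only [Finset.sum_filter, Set.indicator_apply]

lemma lintegral_measure_emptyCellRegion_le [Fintype κ] (μ ν : Measure X) [SigmaFinite μ]
    {cells : ι → Set X} (hmeas : ∀ i, MeasurableSet (cells i)) :
    ∫⁻ S : κ → X, ν (emptyCellRegion cells S) ∂(Measure.pi fun _ => μ) ≤
      ∑ i, ν (cells i) * μ (cells i)ᶜ ^ Fintype.card κ := by
  have hmiss : ∀ i, MeasurableSet (Set.univ.pi fun _ : κ => (cells i)ᶜ) := fun i =>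
    MeasurableSet.univ_pi fun _ => (hmeas i).compl
  calc ∫⁻ S, ν (emptyCellRegion cells S) ∂(Measure.pi fun _ => μ)
      ≤ ∫⁻ S, ∑ i, (Set.univ.pi fun _ : κ => (cells i)ᶜ).indicator (fun _ => ν (cells i)) S
          ∂(Measure.pi fun _ => μ) :=
        lintegral_mono fun S => measure_emptyCellRegion_le ν cells S
    _ = ∑ i, ν (cells i) * μ (cells i)ᶜ ^ Fintype.card κ := by
        rw [lintegral_finsetSum _ fun i _ => measurable_const.indicator (hmiss i)]
        simp [lintegral_indicator_const (hmiss _), Measure.pi_pi]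

end

theorem expected_pair_empty_cell_bound_general {X : Type*} [MeasurableSpace X]
    (𝒮 𝒯 : Measure X) [IsProbabilityMeasure 𝒮] [IsProbabilityMeasure 𝒯]
    (C : ℝ) (hC : 0 < C) (N : ℕ) (cells : Fin N → Set X)
    (hmeas : ∀ i, MeasurableSet (cells i))
    (hWR : ∀ i, ENNReal.ofReal C * 𝒯 (cells i) ≤ 𝒮 (cells i))
    (m : ℕ) (hm : 0 < m) :
    (∫⁻ S : Fin m → X,
        (𝒯.prod 𝒯) {p : X × X |
          (∃ i, p.1 ∈ cells i ∧ ∀ j, S j ∉ cells i) ∨ (∃ i, p.2 ∈ cells i ∧ ∀ j, S j ∉ cells i)}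
        ∂(Measure.pi fun _ : Fin m => 𝒮))
      ≤ ENNReal.ofReal (2 * N / (C * m * Real.exp 1)) := by
  calc _ ≤ ∫⁻ S : Fin m → X, 2 * 𝒯 (emptyCellRegion cells S) ∂(Measure.pi fun _ => 𝒮) :=
        lintegral_mono fun S =>
          (Measure.prod_fst_mem_or_snd_mem_le 𝒯 𝒯 _ _).trans_eq (two_mul _).symm
    _ = 2 * ∫⁻ S : Fin m → X, 𝒯 (emptyCellRegion cells S) ∂(Measure.pi fun _ => 𝒮) :=
        lintegral_const_mul' 2 _ ofNat_ne_top
    _ ≤ 2 * ∑ i, 𝒯 (cells i) * 𝒮 (cells i)ᶜ ^ m := by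
        gcongr
        simpa using lintegral_measure_emptyCellRegion_le 𝒮 𝒯 (κ := Fin m) hmeas
    _ ≤ 2 * ∑ _ : Fin N, ENNReal.ofReal (1 / (C * m * exp 1)) := by
        gcongr with i
        exact measure_mul_measure_compl_pow_le (hmeas i) hC (hWR i) hm
    _ = ENNReal.ofReal (2 * N / (C * m * Real.exp 1)) := by
        rw [Finset.sum_const, Finset.card_univ, Fintype.card_fin, nsmul_eq_mul, ← mul_assoc,
          mul_div_assoc, ← mul_one_div (N : ℝ), ← mul_assoc, ENNReal.ofReal_mul (by positivity)]
        norm_cast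

/-- Under the weight-ratio condition `𝒮(Cᵢ) ≥ C·𝒯(Cᵢ)` on a finite measurable
partition of `X`, the expectation over a sample `S ∼ 𝒮^m` of the `𝒯×𝒯`-measure of pairs with
at least one sample-empty cell is at most `2N/(C·m·e)`. -/
theorem expected_pair_empty_cell_bound {X : Type*} [MeasurableSpace X]
    (𝒮 𝒯 : Measure X) [IsProbabilityMeasure 𝒮] [IsProbabilityMeasure 𝒯]
    (C : ℝ) (hC : 0 < C) (N : ℕ) (cells : Fin N → Set X)
    (hmeas : ∀ i, MeasurableSet (cells i))
    (hdisj : Pairwise (Function.onFun Disjoint cells))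
    (hcover : (⋃ i, cells i) = Set.univ)
    (hWR : ∀ i, ENNReal.ofReal C * 𝒯 (cells i) ≤ 𝒮 (cells i))
    (m : ℕ) (hm : 0 < m) :
    (∫⁻ S : Fin m → X,
        (𝒯.prod 𝒯) {p : X × X |
          (∃ i, p.1 ∈ cells i ∧ ∀ j, S j ∉ cells i) ∨ (∃ i, p.2 ∈ cells i ∧ ∀ j, S j ∉ cells i)}
        ∂(Measure.pi fun _ : Fin m => 𝒮))
      ≤ ENNReal.ofReal (2 * N / (C * m * Real.exp 1)) :=
  expected_pair_empty_cell_bound_general 𝒮 𝒯 C hC N cells hmeas hWR m hm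
end
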